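/- Let M be a boolean R×C matrix and let G_M be its grid embedding. Then for every 1 ≤ i ≤ R, 1 ≤ j ≤ C, and i < k ≤ R, the shortest-path distance from u_{i,j} to b_k in G_M equals (k−i)·2j + 2R·(C−j+1) if M_{k,j} = 0, and equals (k−i)·2j + 2R·(C−j+1) − 1 if M_{k,j} = 1. -/

import Mathlib

/-- Vertices of the grid embedding: `a j` (top terminals), `b i` (right terminals),
`u i j` (grid intersections), `v i j` (subdivision vertex above `u i j`),
`w i j` (subdivision vertex to the right of `u i j`), `x i j` (shortcut vertices).
Indices are 1-based natural numbers; out-of-range vertices are isolated. -/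
inductive GV : Type
  | a (j : ℕ)
  | b (i : ℕ)
  | u (i j : ℕ)
  | v (i j : ℕ)
  | w (i j : ℕ)
  | x (i j : ℕ)
deriving DecidableEq

/-- One-directional edge weights of the grid embedding of a boolean `R × C` matrix `M`;
`⊤` means "no edge". -/
def dirW (R C : ℕ) (M : ℕ → ℕ → Bool) : GV → GV → ℕ∞
  | GV.a j, GV.v i' j' =>
      if i' = 1 ∧ j' = j ∧ 1 ≤ j ∧ j ≤ C then ((2 * j - 1 : ℕ) : ℕ∞) else ⊤
  | GV.v i j, GV.u i' j' =>
      if i' = i ∧ j' = j ∧ 1 ≤ i ∧ i ≤ R ∧ 1 ≤ j ∧ j ≤ C then 1 else ⊤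
  | GV.u i j, GV.v i' j' =>
      if i' = i + 1 ∧ j' = j ∧ 1 ≤ i ∧ i + 1 ≤ R ∧ 1 ≤ j ∧ j ≤ C then
        ((2 * j - 1 : ℕ) : ℕ∞) else ⊤
  | GV.u i j, GV.w i' j' =>
      if i' = i ∧ j' = j ∧ 1 ≤ i ∧ i ≤ R ∧ 1 ≤ j ∧ j ≤ C then 2 else ⊤
  | GV.w i j, GV.u i' j' =>
      if i' = i ∧ j' = j + 1 ∧ 1 ≤ i ∧ i ≤ R ∧ 1 ≤ j ∧ j + 1 ≤ C then
        ((2 * R - 2 : ℕ) : ℕ∞) else ⊤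
  | GV.w i j, GV.b i' =>
      if i' = i ∧ j = C ∧ 1 ≤ i ∧ i ≤ R ∧ 1 ≤ C then ((2 * R - 2 : ℕ) : ℕ∞) else ⊤
  | GV.v i j, GV.x i' j' =>
      if i' = i ∧ j' = j ∧ M i j = true ∧ 1 ≤ i ∧ i ≤ R ∧ 1 ≤ j ∧ j ≤ C then 1 else ⊤
  | GV.x i j, GV.w i' j' =>
      if i' = i ∧ j' = j ∧ M i j = true ∧ 1 ≤ i ∧ i ≤ R ∧ 1 ≤ j ∧ j ≤ C then 1 else ⊤
  | _, _ => ⊤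

/-- Symmetrization of a one-directional weight function. -/
noncomputable def symW {V : Type} (f : V → V → ℕ∞) : V → V → ℕ∞ := fun p q => min (f p q) (f q p)

/-- Edge weights of the grid embedding of a boolean matrix `M`. -/
noncomputable def gridW (R C : ℕ) (M : ℕ → ℕ → Bool) : GV → GV → ℕ∞ := symW (dirW R C M)

/-- One-directional edge weights of the weighted grid embedding of an `R × C` matrix `M`
with entries in `{0, …, X}`: the grid embedding of the all-ones boolean matrix with every
weight multiplied by `X²`, and the weight of each edge `(v i j, x i j)` increased by `M i j`. -/
def dirWt (R C X : ℕ) (M : ℕ → ℕ → ℕ) : GV → GV → ℕ∞ := fun p q =>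
  (X : ℕ∞) ^ 2 * dirW R C (fun _ _ => true) p q +
    (match p, q with
      | GV.v i j, GV.x i' j' => if i' = i ∧ j' = j then (M i j : ℕ∞) else 0
      | _, _ => 0)

/-- Edge weights of the weighted grid embedding of `M`. -/
noncomputable def wgridW (R C X : ℕ) (M : ℕ → ℕ → ℕ) : GV → GV → ℕ∞ := symW (dirWt R C X M)

/-- Edge weights of the mirrored grid `G'`: the (weighted, scaled by `X²`) grid embedding
with all shortcut vertices removed.  Mirroring is a weight-preserving graph isomorphism, so
the mirrored copy is represented by the same abstract graph. -/
noncomputable def mirW (R C X : ℕ) : GV → GV → ℕ∞ :=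
  fun p q => (X : ℕ∞) ^ 2 * gridW R C (fun _ _ => false) p q

/-- Total weight of a walk, given as its list of visited vertices. -/
def cost {V : Type} (W : V → V → ℕ∞) : List V → ℕ∞
  | p :: q :: l => W p q + cost W (q :: l)
  | _ => 0

/-- Shortest-path distance: the least total weight of a walk from `s` to `t`
(`⊤` if there is none; walks through a non-edge have cost `⊤`). -/
noncomputable def gdist {V : Type} (W : V → V → ℕ∞) (s t : V) : ℕ∞ :=
  sInf {c | ∃ l : List V, l.head? = some s ∧ l.getLast? = some t ∧ cost W l = c}

/- ## Potential function -/

def epsN (M : ℕ → ℕ → Bool) (k c : ℕ) : ℕ := if M k c then 1 else 0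

def Sn (R C c : ℕ) : ℕ := 2 * R * (C - c + 1)

def phiu (R C : ℕ) (M : ℕ → ℕ → Bool) (k r c : ℕ) : ℕ :=
  if r < k then (k - r) * (2 * c) + Sn R C c - epsN M k c
  else if r = k then Sn R C c
  else (r - k) * (2 * c) + Sn R C c

def phiv (R C : ℕ) (M : ℕ → ℕ → Bool) (k r c : ℕ) : ℕ :=
  if r < k then (k - r) * (2 * c) + Sn R C c + 1 - epsN M k c
  else if r = k then Sn R C c + 1 - epsN M k c
  else (r - k) * (2 * c) + Sn R C c - 1

def phiw (R C : ℕ) (M : ℕ → ℕ → Bool) (k r c : ℕ) : ℕ :=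
  if r < k then
    (k - r) * (2 * c) + Sn R C c +
      min (3 - epsN M k c) (2 * (k - r) - 1 - (if c < C then epsN M k (c + 1) else 0)) - 1
  else if r = k then Sn R C c - 2
  else (r - k) * (2 * c) + Sn R C c + min (2 - (if M r c then 1 else 0)) (2 * (r - k) - 2)

def Phi (R C : ℕ) (M : ℕ → ℕ → Bool) (k : ℕ) : GV → ℕ
  | GV.a c => phiv R C M k 1 c
  | GV.b r => if r = k then 0 else phiw R C M k r C
  | GV.u r c => phiu R C M k r c
  | GV.v r c => phiv R C M k r c
  | GV.w r c => phiw R C M k r c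
  | GV.x r c => min (phiv R C M k r c) (phiw R C M k r c) + 1

lemma Sn_eq (R C c : ℕ) (h : c + 1 ≤ C) : Sn R C c = Sn R C (c + 1) + 2 * R := by
  unfold Sn
  have h2 : C - c + 1 = (C - (c + 1) + 1) + 1 := by omega
  rw [h2]; ring

lemma Sn_ge (R C c : ℕ) : 2 * R ≤ Sn R C c := by
  unfold Sn
  exact Nat.le_mul_of_pos_right _ (by omega)

lemma SnC (R C : ℕ) : Sn R C C = 2 * R := by simp [Sn]

section Elems
variable (R C : ℕ) (M : ℕ → ℕ → Bool) (k : ℕ)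

lemma E1 (r c : ℕ) (hk1 : 1 ≤ k) (hkR : k ≤ R) (hr : 1 ≤ r) (hrR : r + 1 ≤ R)
    (hc : 1 ≤ c) (hcC : c ≤ C) :
    phiu R C M k r c ≤ phiv R C M k (r + 1) c + (2 * c - 1) ∧
      phiv R C M k (r + 1) c ≤ phiu R C M k r c + (2 * c - 1) := by
  have hS := Sn_ge R C c
  rcases Nat.lt_trichotomy (r + 1) k with h | h | h
  · have id1 : (k - r) * (2 * c) = (k - (r + 1)) * (2 * c) + 2 * c := by
      have h2 : k - r = (k - (r + 1)) + 1 := by omega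
      rw [h2]; ring
    simp only [phiu, phiv, epsN]
    split_ifs <;> omega
  · subst h
    have id1 : (r + 1 - r) * (2 * c) = 2 * c := by
      have h2 : r + 1 - r = 1 := by omega
      rw [h2]; ring
    simp only [phiu, phiv, epsN]
    split_ifs <;> omega
  · rcases Nat.lt_or_ge k r with h2 | h2
    · have id1 : (r + 1 - k) * (2 * c) = (r - k) * (2 * c) + 2 * c := by
        have h3 : r + 1 - k = (r - k) + 1 := by omega
        rw [h3]; ring
      simp only [phiu, phiv, epsN]
      split_ifs <;> omega
    · have h3 : k = r := by omega
      have id1 : (r + 1 - k) * (2 * c) = 2 * c := by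
        have h2 : r + 1 - k = 1 := by omega
        rw [h2]; ring
      simp only [phiu, phiv, epsN]
      split_ifs <;> omega

lemma E2 (r c : ℕ) (hc : 1 ≤ c) :
    phiv R C M k r c ≤ phiu R C M k r c + 1 ∧
      phiu R C M k r c ≤ phiv R C M k r c + 1 := by
  simp only [phiu, phiv, epsN]
  split_ifs <;> omega

lemma E3 (r c : ℕ) (hc : 1 ≤ c) :
    phiw R C M k r c ≤ phiu R C M k r c + 2 ∧
      phiu R C M k r c ≤ phiw R C M k r c + 2 := by
  simp only [phiu, phiw, epsN]
  split_ifs <;> omega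

lemma E4 (r c : ℕ) (hk1 : 1 ≤ k) (hkR : k ≤ R) (hr : 1 ≤ r) (hrR : r ≤ R)
    (hc : 1 ≤ c) (hcC : c + 1 ≤ C) :
    phiw R C M k r c ≤ phiu R C M k r (c + 1) + (2 * R - 2) ∧
      phiu R C M k r (c + 1) ≤ phiw R C M k r c + (2 * R - 2) := by
  have idS : Sn R C c = Sn R C (c + 1) + 2 * R := Sn_eq R C c hcC
  have hS := Sn_ge R C (c + 1)
  have idp1 : (k - r) * (2 * (c + 1)) = (k - r) * (2 * c) + 2 * (k - r) := by ring
  have idp2 : (r - k) * (2 * (c + 1)) = (r - k) * (2 * c) + 2 * (r - k) := by ring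
  simp only [phiu, phiw, epsN]
  split_ifs <;> omega

lemma E5 (r : ℕ) (hk1 : 1 ≤ k) (hkR : k ≤ R) (hC : 1 ≤ C) :
    phiw R C M k r C ≤ (if r = k then 0 else phiw R C M k r C) + (2 * R - 2) ∧
      (if r = k then 0 else phiw R C M k r C) ≤ phiw R C M k r C + (2 * R - 2) := by
  rcases eq_or_ne r k with h | h
  · subst h
    have hSC := SnC R C
    simp only [phiw, epsN, if_pos rfl]
    split_ifs <;> omega
  · rw [if_neg h]
    omega

lemma E7 (r c : ℕ) (hM : M r c = true) :
    phiv R C M k r c ≤ phiw R C M k r c + 2 ∧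
      phiw R C M k r c ≤ phiv R C M k r c + 2 := by
  rcases Nat.lt_trichotomy r k with h | h | h
  · simp only [phiv, phiw, epsN]
    split_ifs <;> omega
  · subst h
    simp only [phiv, phiw, epsN, hM]
    split_ifs <;> omega
  · simp only [phiv, phiw, epsN, hM]
    split_ifs <;> omega

end Elems

/- ## Feasibility in ℕ∞ -/

section Elems2
variable (R C : ℕ) (M : ℕ → ℕ → Bool) (k : ℕ)

lemma E8 (r c : ℕ) (hM : M r c = true) :
    phiv R C M k r c ≤ (min (phiv R C M k r c) (phiw R C M k r c) + 1) + 1 ∧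
      (min (phiv R C M k r c) (phiw R C M k r c) + 1) ≤ phiv R C M k r c + 1 := by
  have := E7 R C M k r c hM
  omega

lemma E9 (r c : ℕ) (hM : M r c = true) :
    (min (phiv R C M k r c) (phiw R C M k r c) + 1) ≤ phiw R C M k r c + 1 ∧
      phiw R C M k r c ≤ (min (phiv R C M k r c) (phiw R C M k r c) + 1) + 1 := by
  have := E7 R C M k r c hM
  omega

lemma both (hk1 : 1 ≤ k) (hkR : k ≤ R) (hC : 1 ≤ C) (p q : GV) :
    ((Phi R C M k p : ℕ∞) ≤ Phi R C M k q + dirW R C M p q) ∧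
      ((Phi R C M k q : ℕ∞) ≤ Phi R C M k p + dirW R C M p q) := by
  cases p <;> cases q <;> simp only [dirW] <;>
    try (simp only [add_top]; exact ⟨le_top, le_top⟩)
  case a.v =>
    split_ifs with h
    · obtain ⟨rfl, rfl, h1, h2⟩ := h
      simp only [Phi]
      exact ⟨by exact_mod_cast Nat.le_add_right _ _,
             by exact_mod_cast Nat.le_add_right _ _⟩
    · simp only [add_top]; exact ⟨le_top, le_top⟩
  case v.u =>
    split_ifs with h
    · obtain ⟨rfl, rfl, h1, h2, h3, h4⟩ := h
      simp only [Phi]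
      exact ⟨by exact_mod_cast (E2 R C M k _ _ h3).1,
             by exact_mod_cast (E2 R C M k _ _ h3).2⟩
    · simp only [add_top]; exact ⟨le_top, le_top⟩
  case u.v =>
    split_ifs with h
    · obtain ⟨rfl, rfl, h1, h2, h3, h4⟩ := h
      simp only [Phi]
      exact ⟨by exact_mod_cast (E1 R C M k _ _ hk1 hkR h1 h2 h3 h4).1,
             by exact_mod_cast (E1 R C M k _ _ hk1 hkR h1 h2 h3 h4).2⟩
    · simp only [add_top]; exact ⟨le_top, le_top⟩
  case u.w =>
    split_ifs with h
    · obtain ⟨rfl, rfl, h1, h2, h3, h4⟩ := h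
      simp only [Phi]
      exact ⟨by exact_mod_cast (E3 R C M k _ _ h3).2,
             by exact_mod_cast (E3 R C M k _ _ h3).1⟩
    · simp only [add_top]; exact ⟨le_top, le_top⟩
  case w.u =>
    split_ifs with h
    · obtain ⟨rfl, rfl, h1, h2, h3, h4⟩ := h
      simp only [Phi]
      exact ⟨by exact_mod_cast (E4 R C M k _ _ hk1 hkR h1 h2 h3 h4).1,
             by exact_mod_cast (E4 R C M k _ _ hk1 hkR h1 h2 h3 h4).2⟩
    · simp only [add_top]; exact ⟨le_top, le_top⟩
  case w.b =>
    split_ifs with h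
    · obtain ⟨rfl, hj, h1, h2, h3⟩ := h
      simp only [Phi]
      rw [hj]
      exact ⟨by exact_mod_cast (E5 R C M k _ hk1 hkR h3).1,
             by exact_mod_cast (E5 R C M k _ hk1 hkR h3).2⟩
    · simp only [add_top]; exact ⟨le_top, le_top⟩
  case v.x =>
    split_ifs with h
    · obtain ⟨rfl, rfl, hM, h1, h2, h3, h4⟩ := h
      simp only [Phi]
      exact ⟨by exact_mod_cast (E8 R C M k _ _ hM).1,
             by exact_mod_cast (E8 R C M k _ _ hM).2⟩
    · simp only [add_top]; exact ⟨le_top, le_top⟩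
  case x.w =>
    split_ifs with h
    · obtain ⟨rfl, rfl, hM, h1, h2, h3, h4⟩ := h
      simp only [Phi]
      exact ⟨by exact_mod_cast (E9 R C M k _ _ hM).1,
             by exact_mod_cast (E9 R C M k _ _ hM).2⟩
    · simp only [add_top]; exact ⟨le_top, le_top⟩

lemma feas (hk1 : 1 ≤ k) (hkR : k ≤ R) (hC : 1 ≤ C) (p q : GV) :
    (Phi R C M k p : ℕ∞) ≤ Phi R C M k q + gridW R C M p q := by
  have h1 := both R C M k hk1 hkR hC p q
  have h2 := both R C M k hk1 hkR hC q p
  unfold gridW symW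
  rcases le_total (dirW R C M p q) (dirW R C M q p) with h | h
  · rw [min_eq_left h]; exact h1.1
  · rw [min_eq_right h]; exact h2.2

end Elems2

/- ## Walk lower bound -/

lemma cost_lower {W : GV → GV → ℕ∞} {φ : GV → ℕ}
    (hf : ∀ p q, (φ p : ℕ∞) ≤ φ q + W p q) :
    ∀ (l : List GV) (s t : GV), l.head? = some s → l.getLast? = some t →
      (φ s : ℕ∞) ≤ φ t + cost W l := by
  intro l
  induction l with
  | nil => intro s t hs ht; simp at hs
  | cons p l ih =>
    cases l with
    | nil =>
      intro s t hs ht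
      simp only [List.head?_cons, Option.some_inj] at hs
      have ht' : p = t := by simpa using ht
      rw [← hs, ← ht']
      simp [cost]
    | cons q l' =>
      intro s t hs ht
      simp only [List.head?_cons, Option.some_inj] at hs
      rw [List.getLast?_cons_cons] at ht
      have h2 := ih q t rfl ht
      rw [← hs]
      calc (φ p : ℕ∞) ≤ φ q + W p q := hf p q
        _ ≤ (φ t + cost W (q :: l')) + W p q := add_le_add_left h2 _
        _ = φ t + (W p q + cost W (q :: l')) := by ring
        _ = φ t + cost W (p :: q :: l') := rfl

/- ## Edge values of gridW -/

section GW
variable (R C : ℕ) (M : ℕ → ℕ → Bool)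

lemma gw_uv (r c : ℕ) (h1 : 1 ≤ r) (h2 : r + 1 ≤ R) (h3 : 1 ≤ c) (h4 : c ≤ C) :
    gridW R C M (GV.u r c) (GV.v (r + 1) c) = ((2 * c - 1 : ℕ) : ℕ∞) := by
  show min (dirW R C M (GV.u r c) (GV.v (r + 1) c))
      (dirW R C M (GV.v (r + 1) c) (GV.u r c)) = _
  rw [show dirW R C M (GV.u r c) (GV.v (r + 1) c) =
      if r + 1 = r + 1 ∧ c = c ∧ 1 ≤ r ∧ r + 1 ≤ R ∧ 1 ≤ c ∧ c ≤ C then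
        ((2 * c - 1 : ℕ) : ℕ∞) else ⊤ from rfl,
    if_pos ⟨rfl, rfl, h1, h2, h3, h4⟩,
    show dirW R C M (GV.v (r + 1) c) (GV.u r c) =
      if r = r + 1 ∧ c = c ∧ 1 ≤ r + 1 ∧ r + 1 ≤ R ∧ 1 ≤ c ∧ c ≤ C then
        (1 : ℕ∞) else ⊤ from rfl,
    if_neg (by omega)]
  exact min_eq_left le_top

lemma gw_vu (r c : ℕ) (h1 : 1 ≤ r) (h2 : r ≤ R) (h3 : 1 ≤ c) (h4 : c ≤ C) :
    gridW R C M (GV.v r c) (GV.u r c) = 1 := by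
  show min (dirW R C M (GV.v r c) (GV.u r c)) (dirW R C M (GV.u r c) (GV.v r c)) = _
  rw [show dirW R C M (GV.v r c) (GV.u r c) =
      if r = r ∧ c = c ∧ 1 ≤ r ∧ r ≤ R ∧ 1 ≤ c ∧ c ≤ C then (1 : ℕ∞) else ⊤ from rfl,
    if_pos ⟨rfl, rfl, h1, h2, h3, h4⟩,
    show dirW R C M (GV.u r c) (GV.v r c) =
      if r = r + 1 ∧ c = c ∧ 1 ≤ r ∧ r + 1 ≤ R ∧ 1 ≤ c ∧ c ≤ C then
        ((2 * c - 1 : ℕ) : ℕ∞) else ⊤ from rfl,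
    if_neg (by omega)]
  exact min_eq_left le_top

lemma gw_uw (r c : ℕ) (h1 : 1 ≤ r) (h2 : r ≤ R) (h3 : 1 ≤ c) (h4 : c ≤ C) :
    gridW R C M (GV.u r c) (GV.w r c) = 2 := by
  show min (dirW R C M (GV.u r c) (GV.w r c)) (dirW R C M (GV.w r c) (GV.u r c)) = _
  rw [show dirW R C M (GV.u r c) (GV.w r c) =
      if r = r ∧ c = c ∧ 1 ≤ r ∧ r ≤ R ∧ 1 ≤ c ∧ c ≤ C then (2 : ℕ∞) else ⊤ from rfl,
    if_pos ⟨rfl, rfl, h1, h2, h3, h4⟩,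
    show dirW R C M (GV.w r c) (GV.u r c) =
      if r = r ∧ c = c + 1 ∧ 1 ≤ r ∧ r ≤ R ∧ 1 ≤ c ∧ c + 1 ≤ C then
        ((2 * R - 2 : ℕ) : ℕ∞) else ⊤ from rfl,
    if_neg (by omega)]
  exact min_eq_left le_top

lemma gw_wu (r c : ℕ) (h1 : 1 ≤ r) (h2 : r ≤ R) (h3 : 1 ≤ c) (h4 : c + 1 ≤ C) :
    gridW R C M (GV.w r c) (GV.u r (c + 1)) = ((2 * R - 2 : ℕ) : ℕ∞) := by
  show min (dirW R C M (GV.w r c) (GV.u r (c + 1)))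
      (dirW R C M (GV.u r (c + 1)) (GV.w r c)) = _
  rw [show dirW R C M (GV.w r c) (GV.u r (c + 1)) =
      if r = r ∧ c + 1 = c + 1 ∧ 1 ≤ r ∧ r ≤ R ∧ 1 ≤ c ∧ c + 1 ≤ C then
        ((2 * R - 2 : ℕ) : ℕ∞) else ⊤ from rfl,
    if_pos ⟨rfl, rfl, h1, h2, h3, h4⟩,
    show dirW R C M (GV.u r (c + 1)) (GV.w r c) =
      if r = r ∧ c = c + 1 ∧ 1 ≤ r ∧ r ≤ R ∧ 1 ≤ c + 1 ∧ c + 1 ≤ C then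
        (2 : ℕ∞) else ⊤ from rfl,
    if_neg (by omega)]
  exact min_eq_left le_top

lemma gw_wb (r : ℕ) (h1 : 1 ≤ r) (h2 : r ≤ R) (h3 : 1 ≤ C) :
    gridW R C M (GV.w r C) (GV.b r) = ((2 * R - 2 : ℕ) : ℕ∞) := by
  show min (dirW R C M (GV.w r C) (GV.b r)) (dirW R C M (GV.b r) (GV.w r C)) = _
  rw [show dirW R C M (GV.w r C) (GV.b r) =
      if r = r ∧ C = C ∧ 1 ≤ r ∧ r ≤ R ∧ 1 ≤ C then ((2 * R - 2 : ℕ) : ℕ∞) else ⊤ from rfl,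
    if_pos ⟨rfl, rfl, h1, h2, h3⟩,
    show dirW R C M (GV.b r) (GV.w r C) = ⊤ from rfl]
  exact min_eq_left le_top

lemma gw_vx (r c : ℕ) (hM : M r c = true) (h1 : 1 ≤ r) (h2 : r ≤ R) (h3 : 1 ≤ c)
    (h4 : c ≤ C) : gridW R C M (GV.v r c) (GV.x r c) = 1 := by
  show min (dirW R C M (GV.v r c) (GV.x r c)) (dirW R C M (GV.x r c) (GV.v r c)) = _
  rw [show dirW R C M (GV.v r c) (GV.x r c) =
      if r = r ∧ c = c ∧ M r c = true ∧ 1 ≤ r ∧ r ≤ R ∧ 1 ≤ c ∧ c ≤ C then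
        (1 : ℕ∞) else ⊤ from rfl,
    if_pos ⟨rfl, rfl, hM, h1, h2, h3, h4⟩,
    show dirW R C M (GV.x r c) (GV.v r c) = ⊤ from rfl]
  exact min_eq_left le_top

lemma gw_xw (r c : ℕ) (hM : M r c = true) (h1 : 1 ≤ r) (h2 : r ≤ R) (h3 : 1 ≤ c)
    (h4 : c ≤ C) : gridW R C M (GV.x r c) (GV.w r c) = 1 := by
  show min (dirW R C M (GV.x r c) (GV.w r c)) (dirW R C M (GV.w r c) (GV.x r c)) = _
  rw [show dirW R C M (GV.x r c) (GV.w r c) =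
      if r = r ∧ c = c ∧ M r c = true ∧ 1 ≤ r ∧ r ≤ R ∧ 1 ≤ c ∧ c ≤ C then
        (1 : ℕ∞) else ⊤ from rfl,
    if_pos ⟨rfl, rfl, hM, h1, h2, h3, h4⟩,
    show dirW R C M (GV.w r c) (GV.x r c) = ⊤ from rfl]
  exact min_eq_left le_top

end GW

/- ## Explicit walks -/

def downL (c : ℕ) : ℕ → ℕ → List GV
  | r, 0 => [GV.u r c]
  | r, n + 1 => GV.u r c :: GV.v (r + 1) c :: downL c (r + 1) n

def rightL (r : ℕ) : ℕ → ℕ → List GV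
  | c, 0 => [GV.w r c]
  | c, n + 1 => GV.w r c :: GV.u r (c + 1) :: rightL r (c + 1) n

lemma downL_cons (c r n : ℕ) : ∃ L, downL c r n = GV.u r c :: L := by
  cases n <;> exact ⟨_, rfl⟩

lemma rightL_cons (r c n : ℕ) : ∃ L, rightL r c n = GV.w r c :: L := by
  cases n <;> exact ⟨_, rfl⟩

lemma downL_head (c r n : ℕ) : (downL c r n).head? = some (GV.u r c) := by
  obtain ⟨L, hL⟩ := downL_cons c r n
  rw [hL]; rfl

lemma rightL_last (r c n : ℕ) : (rightL r c n).getLast? = some (GV.w r (c + n)) := by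
  induction n generalizing c with
  | zero => rfl
  | succ n ih =>
    show (GV.w r c :: GV.u r (c + 1) :: rightL r (c + 1) n).getLast? = _
    rw [List.getLast?_cons_cons]
    obtain ⟨L, hL⟩ := rightL_cons r (c + 1) n
    rw [hL, List.getLast?_cons_cons, ← hL, ih (c + 1)]
    congr 2
    omega

section WalkCost
variable (R C : ℕ) (M : ℕ → ℕ → Bool)

lemma downL_cost (c : ℕ) (h3 : 1 ≤ c) (h4 : c ≤ C) :
    ∀ n r, 1 ≤ r → r + n ≤ R →
      cost (gridW R C M) (downL c r n) = ((n * (2 * c) : ℕ) : ℕ∞) := by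
  intro n
  induction n with
  | zero => intro r h1 h2; simp [downL, cost]
  | succ n ih =>
    intro r h1 h2
    obtain ⟨L, hL⟩ := downL_cons c (r + 1) n
    show cost _ (GV.u r c :: GV.v (r + 1) c :: downL c (r + 1) n) = _
    rw [hL]
    show gridW R C M (GV.u r c) (GV.v (r + 1) c) +
      (gridW R C M (GV.v (r + 1) c) (GV.u (r + 1) c) + cost (gridW R C M) (GV.u (r + 1) c :: L)) = _
    rw [← hL, ih (r + 1) (by omega) (by omega),
      gw_uv R C M r c h1 (by omega) h3 h4, gw_vu R C M (r + 1) c (by omega) (by omega) h3 h4]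
    have hn : (2 * c - 1) + (1 + n * (2 * c)) = (n + 1) * (2 * c) := by
      have : (n + 1) * (2 * c) = n * (2 * c) + 2 * c := by ring
      omega
    exact_mod_cast congrArg (Nat.cast : ℕ → ℕ∞) hn

lemma rightL_cost (r : ℕ) (h1 : 1 ≤ r) (h2 : r ≤ R) :
    ∀ n c, 1 ≤ c → c + n ≤ C →
      cost (gridW R C M) (rightL r c n) = ((n * (2 * R) : ℕ) : ℕ∞) := by
  intro n
  induction n with
  | zero => intro c hc1 hc2; simp [rightL, cost]
  | succ n ih =>
    intro c hc1 hc2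
    obtain ⟨L, hL⟩ := rightL_cons r (c + 1) n
    show cost _ (GV.w r c :: GV.u r (c + 1) :: rightL r (c + 1) n) = _
    rw [hL]
    show gridW R C M (GV.w r c) (GV.u r (c + 1)) +
      (gridW R C M (GV.u r (c + 1)) (GV.w r (c + 1)) + cost (gridW R C M) (GV.w r (c + 1) :: L)) = _
    rw [← hL, ih (c + 1) (by omega) (by omega),
      gw_wu R C M r c h1 h2 hc1 (by omega), gw_uw R C M r (c + 1) h1 h2 (by omega) (by omega)]
    have hn : (2 * R - 2) + (2 + n * (2 * R)) = (n + 1) * (2 * R) := by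
      have : (n + 1) * (2 * R) = n * (2 * R) + 2 * R := by ring
      have : 2 ≤ 2 * R := by omega
      omega
    exact_mod_cast congrArg (Nat.cast : ℕ → ℕ∞) hn

end WalkCost

lemma cost_append {W : GV → GV → ℕ∞} :
    ∀ (l1 : List GV) (p q : GV) (l2 : List GV), l1.getLast? = some p → l2.head? = some q →
      cost W (l1 ++ l2) = cost W l1 + W p q + cost W l2 := by
  intro l1
  induction l1 with
  | nil => intro p q l2 hp hq; simp at hp
  | cons a l ih =>
    cases l with
    | nil =>
      intro p q l2 hp hq
      have hp' : a = p := by simpa using hp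
      cases l2 with
      | nil => simp at hq
      | cons b l2' =>
        have hq' : b = q := by simpa using hq
        rw [← hp', ← hq']
        show W a b + cost W (b :: l2') = cost W [a] + W a b + cost W (b :: l2')
        simp [cost]
    | cons b l' =>
      intro p q l2 hp hq
      rw [List.getLast?_cons_cons] at hp
      have h2 := ih p q l2 hp hq
      show W a b + cost W ((b :: l') ++ l2) = (W a b + cost W (b :: l')) + W p q + cost W l2
      rw [h2]
      ring

lemma downL_last (c r n : ℕ) : (downL c r n).getLast? = some (GV.u (r + n) c) := by
  induction n generalizing r with
  | zero => rfl
  | succ n ih =>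
    show (GV.u r c :: GV.v (r + 1) c :: downL c (r + 1) n).getLast? = _
    rw [List.getLast?_cons_cons]
    obtain ⟨L, hL⟩ := downL_cons c (r + 1) n
    rw [hL, List.getLast?_cons_cons, ← hL, ih (r + 1)]
    congr 2
    omega


/-- Proposition 2.2.  In the grid embedding `G_M` of a boolean `R × C`
matrix `M`, for all `1 ≤ i ≤ R`, `1 ≤ j ≤ C` and `i < k ≤ R`, the shortest-path distance
from `u i j` to `b k` is `(k－i)·2j + 2R·(C−j+1)`, minus `1` when `M k j = 1`. -/
theorem grid_dist_u_b (R C : ℕ) (M : ℕ → ℕ → Bool) (i j k : ℕ)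
    (hi1 : 1 ≤ i) (hiR : i ≤ R) (hj1 : 1 ≤ j) (hjC : j ≤ C) (hik : i < k) (hkR : k ≤ R) :
    gdist (gridW R C M) (GV.u i j) (GV.b k) =
      (if M k j = true then (((k - i) * (2 * j) + 2 * R * (C - j + 1) - 1 : ℕ) : ℕ∞)
       else (((k - i) * (2 * j) + 2 * R * (C - j + 1) : ℕ) : ℕ∞)) := by
  have hR1 : 1 ≤ R := le_trans hi1 hiR
  have hk1 : 1 ≤ k := by omega
  have hk2 : 2 ≤ k := by omega
  have hC1 : 1 ≤ C := le_trans hj1 hjC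
  have hmain : gdist (gridW R C M) (GV.u i j) (GV.b k) =
      (((k - i) * (2 * j) + 2 * R * (C - j + 1) - epsN M k j : ℕ) : ℕ∞) := by
    apply le_antisymm
    · -- upper bound via explicit walk
      unfold gdist
      apply sInf_le
      have e1 : (k - i) * (2 * j) = (k - 1 - i) * (2 * j) + 2 * j := by
        have h : k - i = (k - 1 - i) + 1 := by omega
        rw [h]; ring
      have e2 : 2 * R * (C - j + 1) = (C - j) * (2 * R) + 2 * R := by
        have h : C - j + 1 = (C - j) + 1 := rfl
        rw [h]; ring
      have hdc : cost (gridW R C M) (downL j i (k - 1 - i)) =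
          (((k - 1 - i) * (2 * j) : ℕ) : ℕ∞) :=
        downL_cost R C M j hj1 hjC (k - 1 - i) i hi1 (by omega)
      have hrc : cost (gridW R C M) (rightL k j (C - j)) =
          (((C - j) * (2 * R) : ℕ) : ℕ∞) :=
        rightL_cost R C M k hk1 hkR (C - j) j hj1 (by omega)
      have hdl : (downL j i (k - 1 - i)).getLast? = some (GV.u (k - 1) j) := by
        rw [downL_last]
        congr 2
        omega
      have hgw : gridW R C M (GV.u (k - 1) j) (GV.v k j) = ((2 * j - 1 : ℕ) : ℕ∞) := by
        have h := gw_uv R C M (k - 1) j (by omega) (by omega) hj1 hjC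
        rwa [show k - 1 + 1 = k from by omega] at h
      have hwb : gridW R C M (GV.w k C) (GV.b k) = ((2 * R - 2 : ℕ) : ℕ∞) :=
        gw_wb R C M k hk1 hkR hC1
      obtain ⟨Lr, hLr⟩ := rightL_cons k j (C - j)
      by_cases hM : M k j = true
      · refine ⟨(downL j i (k - 1 - i) ++
          (GV.v k j :: GV.x k j :: rightL k j (C - j))) ++ [GV.b k], ?_, ?_, ?_⟩
        · obtain ⟨Ld, hLd⟩ := downL_cons j i (k - 1 - i)
          rw [hLd]
          rfl
        · exact List.getLast?_concat
        · have hmid_last : (GV.v k j :: GV.x k j :: rightL k j (C - j)).getLast? =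
              some (GV.w k C) := by
            rw [List.getLast?_cons_cons, hLr, List.getLast?_cons_cons, ← hLr, rightL_last]
            congr 2
            omega
          have h2 := cost_append (W := gridW R C M)
            (downL j i (k - 1 - i) ++ (GV.v k j :: GV.x k j :: rightL k j (C - j)))
            (GV.w k C) (GV.b k) [GV.b k]
            ((List.getLast?_append_of_ne_nil _ (by simp)).trans hmid_last) rfl
          have h1 := cost_append (W := gridW R C M) (downL j i (k - 1 - i))
            (GV.u (k - 1) j) (GV.v k j) (GV.v k j :: GV.x k j :: rightL k j (C - j))
            hdl rfl
          have hmidc : cost (gridW R C M) (GV.v k j :: GV.x k j :: rightL k j (C - j)) =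
              gridW R C M (GV.v k j) (GV.x k j) +
                (gridW R C M (GV.x k j) (GV.w k j) + cost (gridW R C M) (rightL k j (C - j))) := by
            rw [hLr]
            rfl
          rw [h2, h1, hmidc, hdc, hrc, hgw, hwb,
            gw_vx R C M k j hM hk1 hkR hj1 hjC, gw_xw R C M k j hM hk1 hkR hj1 hjC]
          have hfin : (k - 1 - i) * (2 * j) + (2 * j - 1) + (1 + (1 + (C - j) * (2 * R)))
              + (2 * R - 2) = (k - i) * (2 * j) + 2 * R * (C - j + 1) - epsN M k j := by
            have he : epsN M k j = 1 := by simp [epsN, hM]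
            omega
          push_cast [← hfin]
          rw [show cost (gridW R C M) [GV.b k] = 0 from rfl, add_zero]
      · refine ⟨(downL j i (k - 1 - i) ++
          (GV.v k j :: GV.u k j :: rightL k j (C - j))) ++ [GV.b k], ?_, ?_, ?_⟩
        · obtain ⟨Ld, hLd⟩ := downL_cons j i (k - 1 - i)
          rw [hLd]
          rfl
        · exact List.getLast?_concat
        · have hmid_last : (GV.v k j :: GV.u k j :: rightL k j (C - j)).getLast? =
              some (GV.w k C) := by
            rw [List.getLast?_cons_cons, hLr, List.getLast?_cons_cons, ← hLr, rightL_last]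
            congr 2
            omega
          have h2 := cost_append (W := gridW R C M)
            (downL j i (k - 1 - i) ++ (GV.v k j :: GV.u k j :: rightL k j (C - j)))
            (GV.w k C) (GV.b k) [GV.b k]
            ((List.getLast?_append_of_ne_nil _ (by simp)).trans hmid_last) rfl
          have h1 := cost_append (W := gridW R C M) (downL j i (k - 1 - i))
            (GV.u (k - 1) j) (GV.v k j) (GV.v k j :: GV.u k j :: rightL k j (C - j))
            hdl rfl
          have hmidc : cost (gridW R C M) (GV.v k j :: GV.u k j :: rightL k j (C - j)) =
              gridW R C M (GV.v k j) (GV.u k j) +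
                (gridW R C M (GV.u k j) (GV.w k j) + cost (gridW R C M) (rightL k j (C - j))) := by
            rw [hLr]
            rfl
          rw [h2, h1, hmidc, hdc, hrc, hgw, hwb,
            gw_vu R C M k j hk1 hkR hj1 hjC, gw_uw R C M k j hk1 hkR hj1 hjC]
          have hfin : (k - 1 - i) * (2 * j) + (2 * j - 1) + (1 + (2 + (C - j) * (2 * R)))
              + (2 * R - 2) = (k - i) * (2 * j) + 2 * R * (C - j + 1) - epsN M k j := by
            have he : epsN M k j = 0 := by simp [epsN, hM]
            omega
          push_cast [← hfin]
          rw [show cost (gridW R C M) [GV.b k] = 0 from rfl, add_zero]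
    · -- lower bound via potential
      unfold gdist
      apply le_sInf
      rintro b ⟨l, h1, h2, rfl⟩
      have hf : ∀ p q, (Phi R C M k p : ℕ∞) ≤ Phi R C M k q + gridW R C M p q :=
        feas R C M k hk1 hkR hC1
      have h3 := cost_lower hf l (GV.u i j) (GV.b k) h1 h2
      have hPb : Phi R C M k (GV.b k) = 0 := by simp [Phi]
      have hPu : Phi R C M k (GV.u i j) =
          (k - i) * (2 * j) + 2 * R * (C - j + 1) - epsN M k j := by
        simp only [Phi, phiu, if_pos hik, Sn]
      rw [hPu, hPb] at h3
      simpa using h3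
  rw [hmain]
  by_cases hM : M k j = true
  · rw [if_pos hM]
    congr 1
    simp [epsN, hM]
  · rw [if_neg hM]
    congr 1
    simp [epsN, hM]
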